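/- Define F(x) = ((x+1)/2)A(1) − A(x) − (x/2) log x for x ∈ (0,1), where A(λ) = ∫_0^∞ {t}{λt}/t² dt. Then F is bounded on (0,1) and F(x) = A(1)/2 + O(x log(1/x) + x) as x → 0⁺; in particular lim_{x→0⁺} F(x) = A(1)/2. -/

import Mathlib

open MeasureTheory Filter Asymptotics

/-- `A(λ) = ∫_0^∞ {t}{λt}/t² dt`. -/
noncomputable def Afn (l : ℝ) : ℝ :=
  ∫ t in Set.Ioi (0:ℝ), Int.fract t * Int.fract (l * t) / t ^ 2

/-- `F(x) = ((x+1)/2) A(1) - A(x) - (x/2) log x`. -/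
noncomputable def Ffn (x : ℝ) : ℝ :=
  (x + 1) / 2 * Afn 1 - Afn x - x / 2 * Real.log x

/-! For `0 < λ ≤ 1` one has `0 ≤ A(λ) ≤ λ log(1/λ) + 2λ`: the integrand `{t}{λt}/t²` is at most
`λ` on `(0, 1]`, at most `λ/t` on `[1, 1/λ]` and at most `1/t²` beyond `1/λ`. Since
`F(x) - A(1)/2 = (x/2) A(1) - A(x) + (x/2) log(1/x)`, this gives
`|F(x) - A(1)/2| ≤ (A(1) + 2)(x log(1/x) + x)` on `(0, 1]`, and `x log(1/x) + x ≤ 1` there. -/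

open Set

theorem Int.fract_le_self_of_nonneg {R : Type*} [Ring R] [LinearOrder R] [IsStrictOrderedRing R]
    [FloorRing R] {a : R} (ha : 0 ≤ a) : Int.fract a ≤ a :=
  sub_le_self _ (by exact_mod_cast Int.floor_nonneg.mpr ha)

lemma Afn_nonneg (l : ℝ) : 0 ≤ Afn l :=
  setIntegral_nonneg measurableSet_Ioi fun t _ => by positivity

section IntegrandBounds

variable {l t : ℝ}

lemma fract_mul_fract_div_sq_le (hl : 0 ≤ l) (ht : 0 ≤ t) :
    Int.fract t * Int.fract (l * t) / t ^ 2 ≤ l :=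
  div_le_of_le_mul₀ (by positivity) hl <| calc
    Int.fract t * Int.fract (l * t) ≤ t * (l * t) :=
      mul_le_mul (Int.fract_le_self_of_nonneg ht) (Int.fract_le_self_of_nonneg (by positivity))
        (Int.fract_nonneg _) ht
    _ = l * t ^ 2 := by ring

lemma fract_mul_fract_div_sq_le_div (hl : 0 ≤ l) (ht : 0 < t) :
    Int.fract t * Int.fract (l * t) / t ^ 2 ≤ l / t :=
  div_le_of_le_mul₀ (by positivity) (by positivity) <| calc
    Int.fract t * Int.fract (l * t) ≤ 1 * (l * t) :=
      mul_le_mul (Int.fract_lt_one t).le (Int.fract_le_self_of_nonneg (by positivity))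
        (Int.fract_nonneg _) zero_le_one
    _ = l / t * t ^ 2 := by field_simp

lemma fract_mul_fract_div_sq_le_inv_sq :
    Int.fract t * Int.fract (l * t) / t ^ 2 ≤ (t ^ 2)⁻¹ := by
  rw [← one_div]
  gcongr
  exact mul_le_one₀ (Int.fract_lt_one t).le (Int.fract_nonneg _) (Int.fract_lt_one _).le

end IntegrandBounds

lemma integrableOn_Ioi_inv_sq {b : ℝ} (hb : 0 < b) :
    IntegrableOn (fun t : ℝ => (t ^ 2)⁻¹) (Ioi b) := by
  refine (integrableOn_Ioi_rpow_of_lt (by norm_num : (-2 : ℝ) < -1) hb).congr_fun (fun t ht => ?_)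
    measurableSet_Ioi
  simp [Real.rpow_neg (hb.trans ht).le]

lemma integral_Ioi_inv_sq {b : ℝ} (hb : 0 < b) : ∫ t in Ioi b, (t ^ 2)⁻¹ = b⁻¹ := by
  have h := integral_Ioi_rpow_of_lt (by norm_num : (-2 : ℝ) < -1) hb
  rw [setIntegral_congr_fun measurableSet_Ioi fun t (ht : b < t) => by
    rw [Real.rpow_neg (hb.trans ht).le, Real.rpow_two]] at h
  norm_num [Real.rpow_neg_one] at h
  exact h

lemma mul_log_one_div_add_self_nonneg {x : ℝ} (hx : x ∈ Ioc (0 : ℝ) 1) :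
    0 ≤ x * Real.log (1 / x) + x := by
  have : 0 ≤ Real.log (1 / x) := Real.log_nonneg (one_le_one_div hx.1 hx.2)
  have := hx.1
  positivity

lemma Afn_le {l : ℝ} (hl : l ∈ Ioc (0 : ℝ) 1) : Afn l ≤ l * Real.log (1 / l) + 2 * l := by
  set f : ℝ → ℝ := fun t => Int.fract t * Int.fract (l * t) / t ^ 2
  by_cases hf : IntegrableOn f (Ioi 0)
  swap
  · -- the Bochner integral of a non-integrable function is `0`
    rw [Afn, integral_undef hf]
    linarith [mul_log_one_div_add_self_nonneg hl, hl.1]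
  obtain ⟨hl0, hl1⟩ := hl
  set b := 1 / l with hb
  have hb1 : 1 ≤ b := one_le_one_div hl0 hl1
  have hb0 : 0 < b := by positivity
  have hf_Ioc {u v : ℝ} (hu : 0 ≤ u) (huv : u ≤ v) : IntervalIntegrable f volume u v :=
    (intervalIntegrable_iff_integrableOn_Ioc_of_le huv).2
      (hf.mono_set (Ioc_subset_Ioi_self.trans (Ioi_subset_Ioi hu)))
  have hsplit : Afn l = (∫ t in (0)..1, f t) + (∫ t in (1)..b, f t) + ∫ t in Ioi b, f t := by
    rw [intervalIntegral.integral_add_adjacent_intervals (hf_Ioc le_rfl zero_le_one)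
      (hf_Ioc zero_le_one hb1),
      intervalIntegral.integral_interval_add_Ioi hf (hf.mono_set (Ioi_subset_Ioi hb0.le))]
    rfl
  have h_near : ∫ t in (0)..1, f t ≤ l := by
    simpa using intervalIntegral.integral_mono_on zero_le_one (hf_Ioc le_rfl zero_le_one) (by simp)
      fun t ht => fract_mul_fract_div_sq_le hl0.le ht.1
  have h_mid : ∫ t in (1)..b, f t ≤ l * Real.log b := by
    have hinv : IntervalIntegrable (fun t => l / t) volume 1 b :=
      (continuousOn_const.div continuousOn_id fun t ht => by
        rw [uIcc_of_le hb1] at ht; exact (zero_lt_one.trans_le ht.1).ne').intervalIntegrable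
    calc ∫ t in (1)..b, f t ≤ ∫ t in (1)..b, l / t :=
          intervalIntegral.integral_mono_on hb1 (hf_Ioc zero_le_one hb1) hinv
            fun t ht => fract_mul_fract_div_sq_le_div hl0.le (by linarith [ht.1])
      _ = l * Real.log b := by
          simp only [div_eq_mul_inv, intervalIntegral.integral_const_mul,
            integral_inv_of_pos one_pos hb0, inv_one, mul_one]
  have h_far : ∫ t in Ioi b, f t ≤ l := by
    calc ∫ t in Ioi b, f t ≤ ∫ t in Ioi b, (t ^ 2)⁻¹ :=
          setIntegral_mono_on (hf.mono_set (Ioi_subset_Ioi hb0.le)) (integrableOn_Ioi_inv_sq hb0)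
            measurableSet_Ioi fun t _ => fract_mul_fract_div_sq_le_inv_sq
      _ = l := by rw [integral_Ioi_inv_sq hb0, hb, one_div, inv_inv]
  linarith

lemma mul_log_one_div_add_self_le_one {x : ℝ} (hx : 0 < x) : x * Real.log (1 / x) + x ≤ 1 := by
  have h := mul_le_mul_of_nonneg_left (Real.log_le_sub_one_of_pos (one_div_pos.mpr hx)) hx.le
  rw [mul_sub, mul_one_div_cancel hx.ne', mul_one] at h
  linarith

lemma tendsto_mul_log_one_div_add_self :
    Tendsto (fun x : ℝ => x * Real.log (1 / x) + x) (nhdsWithin 0 (Ioi 0)) (nhds 0) := by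
  have h : Continuous fun x : ℝ => -(x * Real.log x) + x :=
    Real.continuous_mul_log.neg.add continuous_id
  simpa [one_div, Real.log_inv, mul_neg] using (h.tendsto 0).mono_left nhdsWithin_le_nhds

lemma abs_Ffn_sub_le {x : ℝ} (hx : x ∈ Ioc (0 : ℝ) 1) :
    |Ffn x - Afn 1 / 2| ≤ (Afn 1 + 2) * (x * Real.log (1 / x) + x) := by
  have hA1 := Afn_nonneg 1
  have hAx := Afn_nonneg x
  have hAx_le := Afn_le hx
  have hxL : 0 ≤ x * Real.log (1 / x) :=
    mul_nonneg hx.1.le (Real.log_nonneg (one_le_one_div hx.1 hx.2))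
  have hlog : Real.log x = -Real.log (1 / x) := by rw [one_div, Real.log_inv, neg_neg]
  rw [Ffn, hlog, abs_le]
  constructor <;> nlinarith [hx.1]

lemma abs_Ffn_le {x : ℝ} (hx : x ∈ Ioc (0 : ℝ) 1) : |Ffn x| ≤ 3 / 2 * Afn 1 + 2 := by
  have hA1 := Afn_nonneg 1
  have h := (abs_Ffn_sub_le hx).trans
    (mul_le_of_le_one_right (by linarith) (mul_log_one_div_add_self_le_one hx.1))
  have h' := abs_sub_abs_le_abs_sub (Ffn x) (Afn 1 / 2)
  rw [abs_of_nonneg (by linarith : 0 ≤ Afn 1 / 2)] at h'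
  linarith

/-- `F` is bounded on `(0,1)`, `F(x) = A(1)/2 + O(x log(1/x) + x)` as `x → 0⁺`,
and `lim_{x→0⁺} F(x) = A(1)/2`. -/
theorem Ffn_bounded_and_asymptotic :
    (∃ M : ℝ, ∀ x ∈ Set.Ioo (0:ℝ) 1, |Ffn x| ≤ M) ∧
    (fun x : ℝ => Ffn x - Afn 1 / 2) =O[nhdsWithin 0 (Set.Ioi (0:ℝ))]
      (fun x : ℝ => x * Real.log (1 / x) + x) ∧
    Tendsto Ffn (nhdsWithin 0 (Set.Ioi (0:ℝ))) (nhds (Afn 1 / 2)) := by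
  have hO : (fun x : ℝ => Ffn x - Afn 1 / 2) =O[nhdsWithin 0 (Ioi 0)]
      (fun x : ℝ => x * Real.log (1 / x) + x) := by
    refine .of_bound (Afn 1 + 2) ?_
    filter_upwards [Ioc_mem_nhdsGT zero_lt_one] with x hx
    rw [Real.norm_eq_abs, Real.norm_of_nonneg (mul_log_one_div_add_self_nonneg hx)]
    exact abs_Ffn_sub_le hx
  refine ⟨⟨_, fun x hx => abs_Ffn_le (Ioo_subset_Ioc_self hx)⟩, hO, ?_⟩
  simpa using (hO.trans_tendsto tendsto_mul_log_one_div_add_self).add_const (Afn 1 / 2)
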